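/- For any integers (or elements of a commutative ring) $k_1,\dots,k_{n+1}$, the elementary symmetric polynomial identity $s_n(2k_1+1,\dots,2k_{n+1}+1) = \sum_{m=0}^{n} 2^m (n+1-m)\, s_m(k_1,\dots,k_{n+1})$ holds, where $s_m$ denotes the $m$-th elementary symmetric polynomial. -/

import Mathlib

/-- The `m`-th elementary symmetric polynomial in the variables `x 0, …, x (N-1)`. -/
def esymm {R : Type*} [CommRing R] (N m : ℕ) (x : ℕ → R) : R :=
  ∑ t ∈ (Finset.range N).powersetCard m, ∏ j ∈ t, x j

open Finset

section DoubleCounting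

variable {ι M : Type*} [DecidableEq ι] [AddCommMonoid M]

/-- Each `m`-subset `s` of `U` lies in `(#U - m).choose (n - m)` of the `n`-subsets of `U`. -/
lemma sum_powersetCard_sum_powersetCard {m n : ℕ} (hmn : m ≤ n) (U : Finset ι)
    (f : Finset ι → M) :
    ∑ t ∈ U.powersetCard n, ∑ s ∈ t.powersetCard m, f s
      = ∑ s ∈ U.powersetCard m, (#U - m).choose (n - m) • f s := by
  rw [sum_comm' (t' := U.powersetCard m) (s' := fun s => (U.powersetCard n).filter (s ⊆ ·))
    (fun t s => by simp only [mem_powersetCard, mem_filter]; grind)]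
  refine sum_congr rfl fun s hs => ?_
  obtain ⟨hsU, rfl⟩ := mem_powersetCard.mp hs
  rw [sum_const, card_filter_powersetCard_subset s U n hsU hmn]

end DoubleCounting

lemma esymm_add_one {R : Type*} [CommRing R] (N n : ℕ) (x : ℕ → R) :
    esymm N n (fun i => x i + 1)
      = ∑ m ∈ range (n + 1), ((N - m).choose (n - m) : R) * esymm N m x := by
  have expand : ∀ t ∈ (range N).powersetCard n, ∏ j ∈ t, (x j + 1)
      = ∑ m ∈ range (n + 1), ∑ s ∈ t.powersetCard m, ∏ j ∈ s, x j := by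
    intro t ht
    rw [prod_add_one, sum_powerset, (mem_powersetCard.mp ht).2]
  simp only [esymm, mul_sum]
  rw [sum_congr rfl expand, sum_comm]
  refine sum_congr rfl fun m hm => ?_
  rw [sum_powersetCard_sum_powersetCard (Nat.lt_succ_iff.mp (mem_range.mp hm)), card_range]
  simp only [nsmul_eq_mul]

lemma esymm_const_mul {R : Type*} [CommRing R] (N m : ℕ) (c : R) (x : ℕ → R) :
    esymm N m (fun i => c * x i) = c ^ m * esymm N m x := by
  simp only [esymm, mul_sum]
  refine sum_congr rfl fun s hs => ?_
  rw [prod_mul_distrib, prod_const, (mem_powersetCard.mp hs).2]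

/-- `s_n(2k_1+1, …, 2k_{n+1}+1) = ∑_{m=0}^{n} 2^m (n+1-m) s_m(k_1, …, k_{n+1})`. -/
theorem esymm_two_mul_add_one {R : Type*} [CommRing R] (n : ℕ) (k : ℕ → R) :
    esymm (n + 1) n (fun i => 2 * k i + 1)
      = ∑ m ∈ Finset.range (n + 1), 2 ^ m * ((n + 1 - m : ℕ) : R) * esymm (n + 1) m k := by
  rw [esymm_add_one]
  refine sum_congr rfl fun m hm => ?_
  have hchoose : (n + 1 - m).choose (n - m) = n + 1 - m := by
    rw [show n + 1 - m = n - m + 1 by have := mem_range.mp hm; omega]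
    exact Nat.choose_succ_self_right _
  rw [esymm_const_mul, hchoose]
  ring
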